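/- Fix a ∈ k with a ≠ 0 and an integer n ≥ 2. Let V_a be the representation of the super Jordan plane on kⁿ with basis {v1, …, vn} given by X1 v2 = v1, X1 vi = 0 for i ≠ 2, X2 v1 = a·v1, X2 vi = −a·vi + v_{i+1} for 2 ≤ i ≤ n−1, and X2 vn = −a·vn. Then (X1, X2) satisfies the defining relations X1² = 0 and X2²X1 = X1X2² + X1X2X1, and V_a is an indecomposable representation. -/

import Mathlib

/-- A subspace `W` is a submodule for the representation `(X1, X2)` of the super Jordan
plane if it is invariant under both `X1` and `X2`. -/
def IsSubrep {k V : Type*} [Field k] [AddCommGroup V] [Module k V]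
    (X1 X2 : Module.End k V) (W : Submodule k V) : Prop :=
  Submodule.map X1 W ≤ W ∧ Submodule.map X2 W ≤ W

/-- The representation `(X1, X2)` is indecomposable: `V ≠ 0` and `V` is not the direct
sum of two nonzero submodules. -/
def IsIndecomposable {k V : Type*} [Field k] [AddCommGroup V] [Module k V]
    (X1 X2 : Module.End k V) : Prop :=
  Nontrivial V ∧ ¬ ∃ W L : Submodule k V, IsSubrep X1 X2 W ∧ IsSubrep X1 X2 L ∧
    W ≠ ⊥ ∧ L ≠ ⊥ ∧ IsCompl W L

/-!
`X1 = e₀ ⊗ e₁*` has rank one, and `X2` scales both `e₀` and the coordinate form `e₁*` (by `a` and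
`-a`); the two defining relations only use this. For indecomposability, split `e₁ = w + l` along
`V = W ⊕ L`. Since `X1 e₁ = e₀`, one summand, say `W`, contains `e₀` together with a vector `w`
whose `e₁`-coordinate is nonzero. On `e₁, …, eₙ₋₁` the endomorphism `X2 + a` is the nilpotent shift
`eᵢ ↦ eᵢ₊₁`, so `e₀` and the vectors `(X2 + a)ᵖ w` span `kⁿ`, whence `W = kⁿ` and `L = 0`.
-/

theorem superJordan_relations_of_eq_smulRight {k V : Type*} [CommRing k] [AddCommGroup V]
    [Module k V] {X1 X2 : Module.End k V} {φ : V →ₗ[k] k} {v : V} {a : k}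
    (hX1 : X1 = φ.smulRight v) (hφv : φ v = 0) (hX2v : X2 v = a • v)
    (hφX2 : φ ∘ₗ X2 = (-a) • φ) :
    X1 * X1 = 0 ∧ X2 ^ 2 * X1 = X1 * X2 ^ 2 + X1 * X2 * X1 := by
  have hφX2' (u : V) : φ (X2 u) = -a * φ u := by simpa using LinearMap.congr_fun hφX2 u
  subst hX1
  constructor <;> ext u
  · simp [hφv]
  · simp [pow_two, hX2v, hφX2', hφv, smul_smul]
    ring_nf

theorem isIndecomposable_of_eq_smulRight {k V : Type*} [Field k] [AddCommGroup V] [Module k V]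
    {X1 X2 : Module.End k V} {φ : V →ₗ[k] k} {v : V} (hX1 : X1 = φ.smulRight v) (hφ : φ ≠ 0)
    (h_eq_top : ∀ W : Submodule k V, IsSubrep X1 X2 W → v ∈ W → ∀ w ∈ W, φ w ≠ 0 → W = ⊤) :
    IsIndecomposable X1 X2 := by
  obtain ⟨u, hu⟩ : ∃ u, φ u ≠ 0 := by simpa [DFunLike.ne_iff] using hφ
  refine ⟨⟨u, 0, fun h => hu (by simp [h])⟩, ?_⟩
  have eq_top (P : Submodule k V) (hP : IsSubrep X1 X2 P) (x : V) (hx : x ∈ P) (hφx : φ x ≠ 0) :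
      P = ⊤ := by
    refine h_eq_top P hP ?_ x hx hφx
    have hv : v = (φ x)⁻¹ • X1 x := by
      rw [hX1, LinearMap.smulRight_apply, smul_smul, inv_mul_cancel₀ hφx, one_smul]
    exact hv ▸ P.smul_mem _ (hP.1 (Submodule.mem_map_of_mem hx))
  rintro ⟨W, L, hW, hL, hW0, hL0, hWL⟩
  obtain ⟨w, l, hw, hl, rfl⟩ := Submodule.codisjoint_iff_exists_add_eq.1 hWL.codisjoint u
  rw [map_add] at hu
  by_cases hφw : φ w = 0
  · exact hW0 (eq_bot_of_isCompl_top (eq_top L hL l hl (by simpa [hφw] using hu) ▸ hWL))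
  · exact hL0 (eq_bot_of_top_isCompl (eq_top W hW w hw hφw ▸ hWL))

theorem eq_smulRight_proj_of_apply_single {k ι : Type*} [CommRing k] [Fintype ι] [DecidableEq ι]
    {X : Module.End k (ι → k)} {i₀ i₁ : ι} (h₁ : X (Pi.single i₁ 1) = Pi.single i₀ 1)
    (h : ∀ i, i ≠ i₁ → X (Pi.single i 1) = 0) :
    X = (LinearMap.proj i₁).smulRight (Pi.single i₀ 1) := by
  ext i j
  by_cases hi : i = i₁
  · subst hi
    simp [h₁]
  · simp [h i hi, Pi.single_eq_of_ne (Ne.symm hi)]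

section TailShift

variable {k : Type*} [Field k] {n : ℕ}

def IsTailShift (N : Module.End k (Fin n → k)) : Prop :=
  ∀ (i : Fin n) (c : k), 1 ≤ i.1 →
    N (Pi.single i c) = if h : i.1 + 1 < n then Pi.single ⟨i.1 + 1, h⟩ c else 0

theorem IsTailShift.pow_apply_single {N : Module.End k (Fin n → k)} (hN : IsTailShift N)
    (p : ℕ) (i : Fin n) (c : k) (hi : 1 ≤ i.1) :
    (N ^ p) (Pi.single i c) = if h : i.1 + p < n then Pi.single ⟨i.1 + p, h⟩ c else 0 := by
  induction p with
  | zero => simp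
  | succ p ih =>
    rw [pow_succ', Module.End.mul_apply, ih]
    split_ifs with h h'
    · rw [hN _ c (by simp; omega)]
      exact dif_pos h'
    · rw [hN _ c (by simp; omega)]
      exact dif_neg h'
    · omega
    · exact map_zero N

theorem IsTailShift.eq_top {N : Module.End k (Fin n → k)} (hN : IsTailShift N)
    {W : Submodule k (Fin n → k)} (hW : Set.MapsTo N W W) (h1 : 1 < n)
    (he₀ : Pi.single ⟨0, by omega⟩ 1 ∈ W) {w : Fin n → k} (hw : w ∈ W) (hw₁ : w ⟨1, h1⟩ ≠ 0) :
    W = ⊤ := by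
  have pow_mem (p : ℕ) {x : Fin n → k} (hx : x ∈ W) : (N ^ p) x ∈ W := by
    rw [Module.End.coe_pow]
    exact hW.iterate p hx
  have single_zero_mem (c : k) : Pi.single ⟨0, by omega⟩ c ∈ W := by
    rw [← mul_one c, ← smul_eq_mul, Pi.single_smul']
    exact W.smul_mem c he₀
  suffices key : ∀ j c, Pi.single j c ∈ W from
    Submodule.eq_top_iff'.2 fun u => Finset.univ_sum_single u ▸ W.sum_mem fun j _ => key j (u j)
  intro j
  induction j using WellFoundedGT.induction with
  | _ j ih =>
  intro c
  rcases Nat.eq_zero_or_pos j.1 with hj | hj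
  · rw [show j = ⟨0, by omega⟩ from Fin.ext hj]
    exact single_zero_mem c
  set e₁ : Fin n := ⟨1, h1⟩
  set p := j.1 - 1
  -- `N ^ p` sends `e₁` to `eⱼ`, keeps `e₀` in `W`, and sends `eᵢ` (`i ≥ 2`) past `j` (use `ih`)
  have rest_mem : (N ^ p) (w - Pi.single e₁ (w e₁)) ∈ W := by
    rw [← Finset.univ_sum_single (w - _), map_sum]
    refine W.sum_mem fun i _ => ?_
    rcases Nat.lt_trichotomy i.1 1 with hi | hi | hi
    · rw [show i = ⟨0, by omega⟩ from Fin.ext (Nat.lt_one_iff.1 hi)]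
      exact pow_mem p (single_zero_mem _)
    · obtain rfl : i = e₁ := Fin.ext hi
      simp
    · rw [hN.pow_apply_single p i _ (by omega)]
      split_ifs with h
      · exact ih _ (Fin.mk_lt_mk.2 (by omega)) _
      · exact W.zero_mem
  have main : (N ^ p) (Pi.single e₁ (w e₁)) = Pi.single j (w e₁) := by
    rw [hN.pow_apply_single p e₁ _ le_rfl, dif_pos (by simp [e₁]; omega)]
    congr 1
    exact Fin.ext (by simp [e₁, p]; omega)
  have hj_eq : Pi.single j c = (c / w e₁) • ((N ^ p) w - (N ^ p) (w - Pi.single e₁ (w e₁))) := by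
    rw [← map_sub, sub_sub_cancel, main, ← Pi.single_smul', smul_eq_mul, div_mul_cancel₀ _ hw₁]
  rw [hj_eq]
  exact W.smul_mem _ (W.sub_mem (pow_mem p hw) rest_mem)

theorem isTailShift_add_smul_one {a : k} {X2 : Module.End k (Fin n → k)}
    (hmid : ∀ (i : Fin n), 1 ≤ i.1 → (h : i.1 + 1 < n) →
      X2 (Pi.single i 1) = (-a) • Pi.single i 1 + Pi.single ⟨i.1 + 1, h⟩ 1)
    (hlast : ∀ i : Fin n, i.1 + 1 = n → X2 (Pi.single i 1) = (-a) • Pi.single i 1) :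
    IsTailShift (X2 + a • 1) := by
  intro i c hi
  have hc (j : Fin n) : Pi.single j c = c • Pi.single j (1 : k) := by
    rw [← Pi.single_smul', smul_eq_mul, mul_one]
  simp only [LinearMap.add_apply, LinearMap.smul_apply, Module.End.one_apply, hc, map_smul]
  split_ifs with h
  · rw [hmid i hi h]
    module
  · rw [hlast i (by omega)]
    module

theorem proj_comp_eq_neg_smul_proj {a : k} {X2 : Module.End k (Fin n → k)} (h1 : 1 < n)
    (h₀ : X2 (Pi.single ⟨0, by omega⟩ 1) = a • Pi.single ⟨0, by omega⟩ 1)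
    (hN : IsTailShift (X2 + a • 1)) :
    LinearMap.proj ⟨1, h1⟩ ∘ₗ X2 = (-a) • LinearMap.proj (R := k) ⟨1, h1⟩ := by
  ext i
  rcases Nat.eq_zero_or_pos i.1 with hi | hi
  · rw [show i = ⟨0, by omega⟩ from Fin.ext hi]
    simp [h₀]
  · have hX2 : X2 (Pi.single i 1) =
        (if h : i.1 + 1 < n then Pi.single ⟨i.1 + 1, h⟩ 1 else 0) - a • Pi.single i 1 := by
      rw [← hN i 1 hi]
      simp
    have hshift : (if h : i.1 + 1 < n then (Pi.single ⟨i.1 + 1, h⟩ 1 : Fin n → k) else 0)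
        ⟨1, h1⟩ = 0 := by
      split_ifs
      · exact Pi.single_eq_of_ne (by simp [Fin.ext_iff]; omega) _
      · rfl
    simp [hX2, hshift]

end TailShift

/-- The family `𝒱ₐ` (`a ≠ 0`): on `kⁿ` with standard basis `v₀, …, vₙ₋₁` (written
`v₁, …, vₙ` in the paper), `X1 v₁ = v₀`, `X1 vᵢ = 0` otherwise, `X2 v₀ = a•v₀`,
`X2 vᵢ = -a•vᵢ + vᵢ₊₁` for `1 ≤ i ≤ n-2`, and `X2 vₙ₋₁ = -a•vₙ₋₁`.  It satisfies the
defining relations of the super Jordan plane and is indecomposable. -/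
theorem stmt19 (k : Type*) [Field k] (a : k)
    (n : ℕ) (hn : 2 ≤ n)
    (X1 X2 : Module.End k (Fin n → k))
    (hX1a : X1 (Pi.single (⟨1, by omega⟩ : Fin n) (1 : k)) =
      (Pi.single (⟨0, by omega⟩ : Fin n) (1 : k) : Fin n → k))
    (hX1b : ∀ i : Fin n, i ≠ ⟨1, by omega⟩ → X1 (Pi.single i (1 : k)) = 0)
    (hX2a : X2 (Pi.single (⟨0, by omega⟩ : Fin n) (1 : k)) =
      a • (Pi.single (⟨0, by omega⟩ : Fin n) (1 : k) : Fin n → k))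
    (hX2b : ∀ (i : Fin n) (_ : 1 ≤ i.1) (_ : i.1 ≤ n - 2),
      X2 (Pi.single i (1 : k)) =
        (-a) • (Pi.single i (1 : k) : Fin n → k) +
          (Pi.single (⟨i.1 + 1, by omega⟩ : Fin n) (1 : k) : Fin n → k))
    (hX2c : X2 (Pi.single (⟨n - 1, by omega⟩ : Fin n) (1 : k)) =
      (-a) • (Pi.single (⟨n - 1, by omega⟩ : Fin n) (1 : k) : Fin n → k)) :
    X1 * X1 = 0 ∧ X2 ^ 2 * X1 = X1 * X2 ^ 2 + X1 * X2 * X1 ∧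
      IsIndecomposable X1 X2 := by
  have hX1 := eq_smulRight_proj_of_apply_single hX1a hX1b
  have hN : IsTailShift (X2 + a • 1) :=
    isTailShift_add_smul_one (fun i hi h => hX2b i hi (by omega)) fun i hi => by
      rw [show i = ⟨n - 1, by omega⟩ from Fin.ext (by simp; omega)]
      exact hX2c
  obtain ⟨hX1_sq, hX2_sq⟩ := superJordan_relations_of_eq_smulRight hX1
    (by simp) hX2a (proj_comp_eq_neg_smul_proj (by omega) hX2a hN)
  refine ⟨hX1_sq, hX2_sq, isIndecomposable_of_eq_smulRight hX1 ?_ ?_⟩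
  · intro h
    simpa using LinearMap.congr_fun h (Pi.single ⟨1, by omega⟩ 1)
  · intro W hW he₀ w hw hw₁
    refine hN.eq_top (fun x hx => ?_) (by omega) he₀ hw hw₁
    simpa using W.add_mem (hW.2 (Submodule.mem_map_of_mem hx)) (W.smul_mem a hx)
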